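/- Fix σ² > 0, C > 0, B > 0 and a ∈ [0, 1/2). There exists a constant K (depending only on σ², C, B, a) such that for every integer n ≥ 2, every probability space, all centered square-integrable random variables e₁, …, e_n with E[e_j²] ≤ σ² for all j and |E[e_k e_j]| ≤ C (log j)² k^{−2a} j^{2(a−1)} for all 1 ≤ k < j ≤ n, and all real weights r₁, …, r_n with |r_j| ≤ B (log n)/n for all j, it holds that E[(∑_{j=1}^{n} r_j e_j)²] ≤ K (log n)⁴ / n. -/

import Mathlib

open MeasureTheory Real Finset

universe u

/-! Expanding the square bounds the second moment by `(max |r_j|)² ∑_{j,k} |E[e_j e_k]|`.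
The diagonal contributes at most `n σ²`; since `a ≤ 1/2`, each covariance with `k < j` is at most
`C log² n / j`, so every row of the upper triangle contributes at most `C log² n`. The double sum is
therefore `O(n log² n)`, and multiplying by `(B log n / n)²` gives `O(log⁴ n / n)`. -/

theorem integral_sq_sum_mul_eq {ι Ω : Type*} [MeasurableSpace Ω] {μ : Measure Ω}
    (s : Finset ι) (r : ι → ℝ) {e : ι → Ω → ℝ} (he : ∀ i ∈ s, MemLp (e i) 2 μ) :
    ∫ ω, (∑ i ∈ s, r i * e i ω) ^ 2 ∂μ
      = ∑ i ∈ s, ∑ j ∈ s, r i * r j * ∫ ω, e i ω * e j ω ∂μ := by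
  have hint : ∀ i ∈ s, ∀ j ∈ s, Integrable (fun ω => e i ω * e j ω) μ :=
    fun i hi j hj => (he i hi).integrable_mul (he j hj)
  simp_rw [sq, sum_mul_sum, mul_mul_mul_comm]
  rw [integral_finsetSum _ fun i hi => integrable_finsetSum _ fun j hj =>
    (hint i hi j hj).const_mul _]
  refine sum_congr rfl fun i hi => ?_
  rw [integral_finsetSum _ fun j hj => (hint i hi j hj).const_mul _]
  exact sum_congr rfl fun j _ => integral_const_mul _ _

theorem sum_sum_mul_le_sq_mul {ι : Type*} (s : Finset ι) {r : ι → ℝ} {b : ℝ}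
    (hr : ∀ i ∈ s, |r i| ≤ b) (c : ι → ι → ℝ) :
    ∑ i ∈ s, ∑ j ∈ s, r i * r j * c i j ≤ b ^ 2 * ∑ i ∈ s, ∑ j ∈ s, |c i j| := by
  rw [mul_sum]
  refine sum_le_sum fun i hi => ?_
  rw [mul_sum]
  refine sum_le_sum fun j hj => ?_
  have hb : 0 ≤ b := (abs_nonneg _).trans (hr i hi)
  calc r i * r j * c i j ≤ |r i| * |r j| * |c i j| := by
        rw [← abs_mul, ← abs_mul]; exact le_abs_self _
    _ ≤ b ^ 2 * |c i j| := by
        rw [sq]; gcongr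
        exacts [hr i hi, hr j hj]

theorem sum_sum_ite_lt_le (n : ℕ) {M : ℝ} (hM : 0 ≤ M) :
    ∑ j ∈ Icc 1 n, ∑ i ∈ Icc 1 n, (if i < j then M / j else 0) ≤ n * M := by
  have hinner : ∀ j ∈ Icc 1 n, ∑ i ∈ Icc 1 n, (if i < j then M / j else 0) ≤ M := by
    intro j hj
    have hj0 : (0 : ℝ) < j := by exact_mod_cast (mem_Icc.mp hj).1
    have hcard : (#{i ∈ Icc 1 n | i < j} : ℝ) ≤ j := by
      have := card_le_card (s := {i ∈ Icc 1 n | i < j}) (t := Ico 1 j) fun i hi => by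
        simp only [mem_filter, mem_Icc, mem_Ico] at hi ⊢; omega
      rw [Nat.card_Ico] at this
      exact_mod_cast this.trans (Nat.sub_le j 1)
    rw [← sum_filter, sum_const, nsmul_eq_mul]
    calc (#{i ∈ Icc 1 n | i < j} : ℝ) * (M / j) ≤ j * (M / j) := by gcongr
      _ = M := by field_simp
  calc _ ≤ ∑ _j ∈ Icc 1 n, M := sum_le_sum hinner
    _ = n * M := by simp

theorem sum_sum_abs_le_of_decay (n : ℕ) (c : ℕ → ℕ → ℝ) {σ2 M : ℝ} (hM : 0 ≤ M)
    (hsymm : ∀ i j, c i j = c j i) (hdiag : ∀ j ∈ Icc 1 n, |c j j| ≤ σ2)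
    (hoff : ∀ k j : ℕ, 1 ≤ k → k < j → j ≤ n → |c k j| ≤ M / j) :
    ∑ i ∈ Icc 1 n, ∑ j ∈ Icc 1 n, |c i j| ≤ n * σ2 + 2 * (n * M) := by
  have hsplit : ∀ i ∈ Icc 1 n, ∀ j ∈ Icc 1 n, |c i j| ≤
      (if i = j then σ2 else 0) + (if i < j then M / j else 0) + (if j < i then M / i else 0) := by
    intro i hi j hj
    rw [mem_Icc] at hi hj
    rcases lt_trichotomy i j with h | rfl | h
    · simp [h, h.ne, h.not_gt, hoff i j hi.1 h hj.2]
    · simp [hdiag i (mem_Icc.mpr hi)]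
    · simp [h, h.ne', h.not_gt, hsymm i j, hoff j i hj.1 h hi.2]
  have hdiagSum : ∑ i ∈ Icc 1 n, ∑ j ∈ Icc 1 n, (if i = j then σ2 else 0) = n * σ2 := by
    rw [sum_congr rfl fun i hi => by rw [sum_ite_eq, if_pos hi]]
    simp
  have hupper := sum_sum_ite_lt_le n hM
  rw [sum_comm] at hupper
  calc _ ≤ ∑ i ∈ Icc 1 n, ∑ j ∈ Icc 1 n, ((if i = j then σ2 else 0)
          + (if i < j then M / j else 0) + (if j < i then M / i else 0)) :=
        sum_le_sum fun i hi => sum_le_sum fun j hj => hsplit i hi j hj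
    _ = n * σ2 + ∑ i ∈ Icc 1 n, ∑ j ∈ Icc 1 n, (if i < j then M / j else 0)
          + ∑ i ∈ Icc 1 n, ∑ j ∈ Icc 1 n, (if j < i then M / i else 0) := by
        simp only [sum_add_distrib, hdiagSum]
    _ ≤ n * σ2 + 2 * (n * M) := by linarith [hupper, sum_sum_ite_lt_le n hM]

theorem rpow_neg_mul_rpow_le_inv {a x y : ℝ} (ha0 : 0 ≤ a) (ha : a ≤ 1 / 2)
    (hx : 1 ≤ x) (hy : 1 ≤ y) : x ^ (-(2 * a)) * y ^ (2 * (a - 1)) ≤ y⁻¹ := by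
  calc x ^ (-(2 * a)) * y ^ (2 * (a - 1)) ≤ 1 * y ^ (-1 : ℝ) := by
        gcongr
        · exact rpow_le_one_of_one_le_of_nonpos hx (by linarith)
        · linarith
    _ = y⁻¹ := by rw [one_mul, rpow_neg_one]

theorem mul_log_sq_mul_rpow_le {C a : ℝ} (hC : 0 ≤ C) (ha0 : 0 ≤ a) (ha : a ≤ 1 / 2)
    {k j n : ℕ} (hk : 1 ≤ k) (hkj : k ≤ j) (hjn : j ≤ n) :
    C * log j ^ 2 * (k : ℝ) ^ (-(2 * a)) * (j : ℝ) ^ (2 * (a - 1)) ≤ C * log n ^ 2 / j := by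
  have hk1 : (1 : ℝ) ≤ k := by exact_mod_cast hk
  have hj1 : (1 : ℝ) ≤ j := by exact_mod_cast hk.trans hkj
  calc _ = C * log j ^ 2 * ((k : ℝ) ^ (-(2 * a)) * (j : ℝ) ^ (2 * (a - 1))) := by ring
    _ ≤ C * log n ^ 2 * (j : ℝ)⁻¹ := by
      gcongr C * ?_ ^ 2 * ?_
      · exact log_le_log (by positivity) (by exact_mod_cast hjn)
      · exact rpow_neg_mul_rpow_le_inv ha0 ha hk1 hj1
    _ = C * log n ^ 2 / j := (div_eq_mul_inv _ _).symm

theorem sq_div_mul_le_pow_four_div {B C σ2 ℓ L x : ℝ} (hσ2 : 0 ≤ σ2)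
    (hℓ : 0 < ℓ) (hL : ℓ ≤ L) (hx : 0 < x) :
    (B * L / x) ^ 2 * (x * σ2 + 2 * (x * (C * L ^ 2)))
      ≤ B ^ 2 * (σ2 / ℓ ^ 2 + 2 * C) * L ^ 4 / x := by
  have hσ2L : σ2 * L ^ 2 ≤ σ2 / ℓ ^ 2 * L ^ 4 := by
    rw [div_mul_eq_mul_div, le_div_iff₀ (by positivity)]
    calc σ2 * L ^ 2 * ℓ ^ 2 ≤ σ2 * L ^ 2 * L ^ 2 := by gcongr
      _ = σ2 * L ^ 4 := by ring
  calc _ = B ^ 2 * (σ2 * L ^ 2 + 2 * C * L ^ 4) / x := by field_simp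
    _ ≤ _ := by
      gcongr ?_ / _
      nlinarith [mul_le_mul_of_nonneg_left hσ2L (sq_nonneg B)]

theorem stmt_8_general (σ2 C B a : ℝ) (hσ2 : 0 < σ2) (hC : 0 < C)
    (ha0 : 0 ≤ a) (ha : a < 1 / 2) :
    ∃ K : ℝ, ∀ (n : ℕ), 2 ≤ n →
      ∀ (Ω : Type u) (_ : MeasurableSpace Ω) (P : Measure Ω), IsProbabilityMeasure P →
        ∀ (e : ℕ → Ω → ℝ) (r : ℕ → ℝ),
          (∀ j ∈ Finset.Icc 1 n, MemLp (e j) 2 P) →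
          (∀ j ∈ Finset.Icc 1 n, ∫ ω, e j ω ∂P = 0) →
          (∀ j ∈ Finset.Icc 1 n, ∫ ω, (e j ω) ^ 2 ∂P ≤ σ2) →
          (∀ k j : ℕ, 1 ≤ k → k < j → j ≤ n →
            |∫ ω, e k ω * e j ω ∂P| ≤
              C * (Real.log j) ^ 2 * (k : ℝ) ^ (-(2 * a)) * (j : ℝ) ^ (2 * (a - 1))) →
          (∀ j ∈ Finset.Icc 1 n, |r j| ≤ B * Real.log n / n) →
          ∫ ω, (∑ j ∈ Finset.Icc 1 n, r j * e j ω) ^ 2 ∂P ≤ K * (Real.log n) ^ 4 / n := by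
  refine ⟨B ^ 2 * (σ2 / log 2 ^ 2 + 2 * C), ?_⟩
  intro n hn Ω _ P _ e r he _ hvar hcov hr
  have hdiag : ∀ j ∈ Icc 1 n, |∫ ω, e j ω * e j ω ∂P| ≤ σ2 := fun j hj => by
    simp_rw [← sq]
    rw [abs_of_nonneg (integral_nonneg fun _ => sq_nonneg _)]
    exact hvar j hj
  have hoff : ∀ k j : ℕ, 1 ≤ k → k < j → j ≤ n →
      |∫ ω, e k ω * e j ω ∂P| ≤ C * log n ^ 2 / j := fun k j hk hkj hjn =>
    (hcov k j hk hkj hjn).trans (mul_log_sq_mul_rpow_le hC.le ha0 ha.le hk hkj.le hjn)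
  have hsymm : ∀ i j, ∫ ω, e i ω * e j ω ∂P = ∫ ω, e j ω * e i ω ∂P := fun i j => by
    simp_rw [mul_comm (e i _)]
  rw [integral_sq_sum_mul_eq _ _ he]
  calc _ ≤ (B * log n / n) ^ 2 * ∑ i ∈ Icc 1 n, ∑ j ∈ Icc 1 n, |∫ ω, e i ω * e j ω ∂P| :=
        sum_sum_mul_le_sq_mul _ hr _
    _ ≤ (B * log n / n) ^ 2 * (n * σ2 + 2 * (n * (C * log n ^ 2))) := by
        gcongr
        exact sum_sum_abs_le_of_decay n _ (by positivity) hsymm hdiag hoff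
    _ ≤ _ := sq_div_mul_le_pow_four_div hσ2.le (log_pos one_lt_two)
        (log_le_log two_pos (by exact_mod_cast hn)) (by positivity)

theorem stmt_8 (σ2 C B a : ℝ) (hσ2 : 0 < σ2) (hC : 0 < C) (hB : 0 < B)
    (ha0 : 0 ≤ a) (ha : a < 1 / 2) :
    ∃ K : ℝ, ∀ (n : ℕ), 2 ≤ n →
      ∀ (Ω : Type u) (_ : MeasurableSpace Ω) (P : Measure Ω), IsProbabilityMeasure P →
        ∀ (e : ℕ → Ω → ℝ) (r : ℕ → ℝ),
          (∀ j ∈ Finset.Icc 1 n, MemLp (e j) 2 P) →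
          (∀ j ∈ Finset.Icc 1 n, ∫ ω, e j ω ∂P = 0) →
          (∀ j ∈ Finset.Icc 1 n, ∫ ω, (e j ω) ^ 2 ∂P ≤ σ2) →
          (∀ k j : ℕ, 1 ≤ k → k < j → j ≤ n →
            |∫ ω, e k ω * e j ω ∂P| ≤
              C * (Real.log j) ^ 2 * (k : ℝ) ^ (-(2 * a)) * (j : ℝ) ^ (2 * (a - 1))) →
          (∀ j ∈ Finset.Icc 1 n, |r j| ≤ B * Real.log n / n) →
          ∫ ω, (∑ j ∈ Finset.Icc 1 n, r j * e j ω) ^ 2 ∂P ≤ K * (Real.log n) ^ 4 / n :=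
  stmt_8_general σ2 C B a hσ2 hC ha0 ha
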